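/- arXiv:1707.07953 — 4 statements merged into one kernel-verified Lean document; each statement's English description precedes it below -/
import Mathlib

section
/- The 4×4 matrix S₄ with rows (0,1,1,0), (0,0,1,1), (1,0,0,1), (1,1,0,0) admits an exact PSD factorization of size 3: with A¹=diag(1,0,0), A²=diag(0,1,0), A³=diag(0,0,1), A⁴ the 3×3 matrix with entries (A⁴)_{pq}=(−1)^{p+q}, B¹=diag(0,0,1), B²=diag(1,0,0), B³ the matrix with 1's in the top-left 2×2 block and zeros elsewhere, and B⁴ the matrix with 1's in the bottom-right 2×2 block and zeros elsewhere, all eight matrices are symmetric positive semidefinite and S₄(i,j) = trace(AⁱBʲ) for all i,j ∈ {1,2,3,4}. -/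
open Matrix

lemma psd_of_factor {m n : ℕ} (M : Matrix (Fin m) (Fin n) ℝ)
    (N : Matrix (Fin n) (Fin n) ℝ) (h : N = Mᴴ * M) : N.PosSemidef := by
  rw [h]; exact posSemidef_conjTranspose_mul_self M

theorem square_slack_matrix_psd_factorization :
    let S₄ : Matrix (Fin 4) (Fin 4) ℝ :=
      !![0,1,1,0; 0,0,1,1; 1,0,0,1; 1,1,0,0]
    let A : Fin 4 → Matrix (Fin 3) (Fin 3) ℝ :=
      ![!![1,0,0; 0,0,0; 0,0,0],
        !![0,0,0; 0,1,0; 0,0,0],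
        !![0,0,0; 0,0,0; 0,0,1],
        !![1,-1,1; -1,1,-1; 1,-1,1]]
    let B : Fin 4 → Matrix (Fin 3) (Fin 3) ℝ :=
      ![!![0,0,0; 0,0,0; 0,0,1],
        !![1,0,0; 0,0,0; 0,0,0],
        !![1,1,0; 1,1,0; 0,0,0],
        !![0,0,0; 0,1,1; 0,1,1]]
    (∀ i, (A i).PosSemidef) ∧ (∀ j, (B j).PosSemidef) ∧
    (∀ i j, S₄ i j = ((A i) * (B j)).trace) := by
  refine ⟨?_, ?_, ?_⟩
  · intro i
    fin_cases i
    · exact psd_of_factor !![(1:ℝ),0,0] _ (by ext i j; fin_cases i <;> fin_cases j <;>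
        simp [Matrix.mul_apply, Fin.sum_univ_succ, vecHead, vecTail])
    · exact psd_of_factor !![(0:ℝ),1,0] _ (by ext i j; fin_cases i <;> fin_cases j <;>
        simp [Matrix.mul_apply, Fin.sum_univ_succ, vecHead, vecTail])
    · exact psd_of_factor !![(0:ℝ),0,1] _ (by ext i j; fin_cases i <;> fin_cases j <;>
        simp [Matrix.mul_apply, Fin.sum_univ_succ, vecHead, vecTail])
    · exact psd_of_factor !![(1:ℝ),-1,1] _ (by ext i j; fin_cases i <;> fin_cases j <;>
        norm_num [Matrix.mul_apply, Fin.sum_univ_succ, vecHead, vecTail])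
  · intro j
    fin_cases j
    · exact psd_of_factor !![(0:ℝ),0,1] _ (by ext i j; fin_cases i <;> fin_cases j <;>
        simp [Matrix.mul_apply, Fin.sum_univ_succ, vecHead, vecTail])
    · exact psd_of_factor !![(1:ℝ),0,0] _ (by ext i j; fin_cases i <;> fin_cases j <;>
        simp [Matrix.mul_apply, Fin.sum_univ_succ, vecHead, vecTail])
    · exact psd_of_factor !![(1:ℝ),1,0] _ (by ext i j; fin_cases i <;> fin_cases j <;>
        norm_num [Matrix.mul_apply, Fin.sum_univ_succ, vecHead, vecTail])
    · exact psd_of_factor !![(0:ℝ),1,1] _ (by ext i j; fin_cases i <;> fin_cases j <;>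
        norm_num [Matrix.mul_apply, Fin.sum_univ_succ, vecHead, vecTail])
  · intro i j
    fin_cases i <;> fin_cases j <;>
      norm_num [Matrix.trace, Matrix.mul_apply, Matrix.diag, Fin.sum_univ_succ]
end

section
/- Conversely, if a nonnegative m×n matrix X has a Hadamard square root M of rank k (M_{ij}² = X_{ij}, rank(M) = k), then X admits a PSD factorization of size k in which every factor has rank at most one: writing M = 𝐀ᵀ𝐁 with 𝐀 ∈ ℝ^{k×m}, 𝐁 ∈ ℝ^{k×n} and setting Aⁱ = aⁱ(aⁱ)ᵀ, Bʲ = bʲ(bʲ)ᵀ for the columns aⁱ of 𝐀 and bʲ of 𝐁, one has trace(AⁱBʲ) = X_{ij}. Hence the psd-rank of X is at most its square root rank. -/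
/-!
Factor the Hadamard square root as `M = P * Q` through its column space, so that
`M i j = pᵢ ⬝ᵥ qⱼ` for the rows `pᵢ` of `P` and the columns `qⱼ` of `Q`. The rank-one matrices
`pᵢ pᵢᵀ` and `qⱼ qⱼᵀ` are positive semidefinite, and `trace (pᵢ pᵢᵀ qⱼ qⱼᵀ) = (pᵢ ⬝ᵥ qⱼ)² = X i j`.
-/

open Matrix

theorem Matrix.exists_eq_mul_of_rank_eq {K m n : Type*} [Field K] [Fintype n] [DecidableEq n]
    (M : Matrix m n K) {k : ℕ} (hk : M.rank = k) :
    ∃ (P : Matrix m (Fin k) K) (Q : Matrix (Fin k) n K), M = P * Q := by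
  let V := LinearMap.range M.mulVecLin
  let b : Module.Basis (Fin k) K V := Module.finBasisOfFinrankEq K V hk
  have hcol : ∀ j, M.col j ∈ V := fun j =>
    ⟨Pi.single j 1, by simp⟩
  refine ⟨of fun i t => (b t : m → K) i, of fun t j => b.repr ⟨M.col j, hcol j⟩ t, ?_⟩
  ext i j
  have hsum := congrArg (fun v : V => (v : m → K) i) (b.sum_repr ⟨M.col j, hcol j⟩)
  simp only [Submodule.coe_sum, Submodule.coe_smul, Finset.sum_apply, Pi.smul_apply,
    smul_eq_mul, col_apply] at hsum
  simp only [mul_apply, of_apply, ← hsum, mul_comm]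

theorem Matrix.trace_vecMulVec_self_mul_vecMulVec_self {R n : Type*} [Fintype n] [CommRing R]
    (u v : n → R) : (vecMulVec u u * vecMulVec v v).trace = (u ⬝ᵥ v) ^ 2 := by
  rw [vecMulVec_mul_vecMulVec, trace_vecMulVec, dotProduct_smul, smul_eq_mul, sq]

theorem hadamard_sqrt_gives_rank_one_psd_factorization_general
    {m n k : ℕ} (X : Matrix (Fin m) (Fin n) ℝ)
    (M : Matrix (Fin m) (Fin n) ℝ)
    (hM : ∀ i j, (M i j) ^ 2 = X i j) (hrank : M.rank = k) :
    ∃ (A : Fin m → Matrix (Fin k) (Fin k) ℝ) (B : Fin n → Matrix (Fin k) (Fin k) ℝ),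
      (∀ i, (A i).PosSemidef) ∧ (∀ j, (B j).PosSemidef) ∧
      (∀ i, (A i).rank ≤ 1) ∧ (∀ j, (B j).rank ≤ 1) ∧
      (∀ i j, X i j = ((A i) * (B j)).trace) := by
  obtain ⟨P, Q, rfl⟩ := M.exists_eq_mul_of_rank_eq hrank
  have hpsd : ∀ u : Fin k → ℝ, (vecMulVec u u).PosSemidef := fun u => by
    simpa using posSemidef_vecMulVec_self_star u
  refine ⟨fun i => vecMulVec (P i) (P i), fun j => vecMulVec (Q.col j) (Q.col j),
    fun i => hpsd _, fun j => hpsd _, fun i => rank_vecMulVec_le _ _,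
    fun j => rank_vecMulVec_le _ _, fun i j => ?_⟩
  rw [trace_vecMulVec_self_mul_vecMulVec_self, ← hM, mul_apply']
  rfl

theorem hadamard_sqrt_gives_rank_one_psd_factorization
    {m n k : ℕ} (X : Matrix (Fin m) (Fin n) ℝ) (hX : ∀ i j, 0 ≤ X i j)
    (M : Matrix (Fin m) (Fin n) ℝ)
    (hM : ∀ i j, (M i j) ^ 2 = X i j) (hrank : M.rank = k) :
    ∃ (A : Fin m → Matrix (Fin k) (Fin k) ℝ) (B : Fin n → Matrix (Fin k) (Fin k) ℝ),
      (∀ i, (A i).PosSemidef) ∧ (∀ j, (B j).PosSemidef) ∧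
      (∀ i, (A i).rank ≤ 1) ∧ (∀ j, (B j).rank ≤ 1) ∧
      (∀ i j, X i j = ((A i) * (B j)).trace) :=
  hadamard_sqrt_gives_rank_one_psd_factorization_general X M hM hrank
end

section
/- The psd-rank of a nonnegative matrix X is at least ⌈(1/2)(√(1+8·rank(X)) − 1)⌉; equivalently, if X admits a PSD factorization of size k then rank(X) ≤ k(k+1)/2. -/
open Matrix

theorem rank_le_of_psd_factorization
    {m n k : ℕ} (X : Matrix (Fin m) (Fin n) ℝ) (hX : ∀ i j, 0 ≤ X i j)
    (A : Fin m → Matrix (Fin k) (Fin k) ℝ) (B : Fin n → Matrix (Fin k) (Fin k) ℝ)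
    (hA : ∀ i, (A i).PosSemidef) (hB : ∀ j, (B j).PosSemidef)
    (hfact : ∀ i j, X i j = ((A i) * (B j)).trace) :
    X.rank ≤ k * (k + 1) / 2 := by
  classical
  -- symmetry of A and B
  have hAs : ∀ i p q, A i p q = A i q p := by
    intro i p q
    have := (hA i).isHermitian
    conv_lhs => rw [← this]
    simp [conjTranspose_apply]
  have hBs : ∀ j p q, B j p q = B j q p := by
    intro j p q
    have := (hB j).isHermitian
    conv_lhs => rw [← this]
    simp [conjTranspose_apply]
  set σ := { p : Fin k × Fin k // p.1 ≤ p.2 } with hσ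
  let M : Matrix (Fin m) σ ℝ := fun i s => A i s.1.1 s.1.2
  let N : Matrix σ (Fin n) ℝ := fun s j =>
    (if s.1.1 = s.1.2 then (1 : ℝ) else 2) * B j s.1.1 s.1.2
  have hXMN : X = M * N := by
    ext i j
    rw [hfact i j, Matrix.mul_apply, Matrix.trace]
    -- trace (A i * B j) = ∑ p, ∑ q, A i p q * B j q p
    have htr : ∑ p, ((A i) * (B j)).diag p
        = ∑ x : Fin k × Fin k, A i x.1 x.2 * B j x.2 x.1 := by
      rw [Fintype.sum_prod_type]
      simp [Matrix.diag, Matrix.mul_apply]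
    rw [htr]
    -- now compare with the sum over the subtype
    have hsub : ∑ s : σ, M i s * N s j
        = ∑ x : Fin k × Fin k,
            (if x.1 ≤ x.2 then
              A i x.1 x.2 * ((if x.1 = x.2 then (1 : ℝ) else 2) * B j x.1 x.2)
             else 0) := by
      rw [← Finset.sum_filter]
      exact (Finset.sum_subtype (Finset.univ.filter fun x : Fin k × Fin k => x.1 ≤ x.2)
        (fun x => by simp)
        (fun x => A i x.1 x.2 * ((if x.1 = x.2 then (1 : ℝ) else 2) * B j x.1 x.2))).symm
    rw [hsub]
    set f : Fin k × Fin k → ℝ := fun x =>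
      (if x.1 ≤ x.2 then
        A i x.1 x.2 * ((if x.1 = x.2 then (1 : ℝ) else 2) * B j x.1 x.2)
       else 0) - A i x.1 x.2 * B j x.2 x.1 with hf
    have hzero : ∑ x : Fin k × Fin k, f x = 0 := by
      apply Finset.sum_ninvolution (g := Prod.swap)
      · intro a
        rcases lt_trichotomy a.1 a.2 with h | h | h
        · have h1 : a.1 ≤ a.2 := le_of_lt h
          have h2 : ¬ (a.2 ≤ a.1) := not_le.mpr h
          have h3 : a.1 ≠ a.2 := ne_of_lt h
          simp only [hf, Prod.fst_swap, Prod.snd_swap, if_pos h1, if_neg h2,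
            if_neg h3]
          rw [hAs i a.2 a.1, hBs j a.1 a.2]
          ring
        · simp only [hf, Prod.fst_swap, Prod.snd_swap, h]
          simp
        · have h1 : a.2 ≤ a.1 := le_of_lt h
          have h2 : ¬ (a.1 ≤ a.2) := not_le.mpr h
          have h3 : a.2 ≠ a.1 := ne_of_lt h
          simp only [hf, Prod.fst_swap, Prod.snd_swap, if_pos h1, if_neg h2,
            if_neg h3]
          rw [hAs i a.2 a.1, hBs j a.1 a.2]
          ring
      · intro a ha hsw
        apply ha
        have h12 : a.1 = a.2 := by
          have := congrArg Prod.fst hsw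
          simpa using this.symm
        simp [hf, h12]
      · intro a; exact Finset.mem_univ _
      · intro a; exact Prod.swap_swap a
    have := Finset.sum_sub_distrib (s := (Finset.univ : Finset (Fin k × Fin k)))
      (f := fun x => (if x.1 ≤ x.2 then
        A i x.1 x.2 * ((if x.1 = x.2 then (1 : ℝ) else 2) * B j x.1 x.2)
       else 0)) (g := fun x => A i x.1 x.2 * B j x.2 x.1)
    rw [hf] at hzero
    rw [this] at hzero
    linarith [hzero]
  have hcard : Fintype.card σ = k * (k + 1) / 2 := by
    rw [← Fintype.card_congr (Sym2.sortEquiv (α := Fin k))]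
    rw [Sym2.card]
    simp [Nat.choose_two_right, Nat.mul_comm]
  calc X.rank = (M * N).rank := by rw [hXMN]
    _ ≤ M.rank := Matrix.rank_mul_le_left M N
    _ ≤ Fintype.card σ := Matrix.rank_le_card_width M
    _ = k * (k + 1) / 2 := hcard
end

section
/- The symmetric 6×6 matrix P₄ with diagonal entries 2, with P₄(i,7−i)=0 for all i, and all other entries 1, is completely positive semidefinite with cpsd factors of size 4: with the six 4×2 matrices aⁱ listed as a¹=[e₁ e₂], a²=[e₁ e₃], a³=[e₁ e₄], a⁴=[e₃ e₂], a⁵=[e₂ e₄], a⁶=[e₃ e₄] (columns being standard basis vectors of ℝ⁴), setting Aⁱ = aⁱ(aⁱ)ᵀ, one has P₄(i,j) = trace(AⁱAʲ) for all i,j ∈ {1,...,6}. -/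
/-!
Each `aⁱ` consists of two distinct standard basis columns `e_s`, `s ∈ Sⁱ`, so `Aⁱ = aⁱ(aⁱ)ᵀ` is
the diagonal 0/1 matrix of `Sⁱ` (the orthogonal projection onto `span {e_s : s ∈ Sⁱ}`) and
`trace (AⁱAʲ) = #(Sⁱ ∩ Sʲ)`. The six sets `Sⁱ` are the 2-subsets of a 4-set, listed so that `Sⁱ`
and `S⁷⁻ⁱ` are complementary; their intersection numbers are exactly the entries of `P₄`.
-/

open Matrix Finset

namespace Matrix

variable {l m n R : Type*} [Fintype l] [Fintype n]

theorem posSemidef_self_mul_transpose [Fintype m] (M : Matrix m n ℝ) : (M * Mᵀ).PosSemidef := by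
  simpa only [conjTranspose_eq_transpose_of_trivial] using posSemidef_self_mul_conjTranspose M

variable [DecidableEq m] [CommSemiring R]

theorem one_submatrix_mul_transpose {v : n → m} (hv : v.Injective) :
    (1 : Matrix m m R).submatrix id v * ((1 : Matrix m m R).submatrix id v)ᵀ =
      diagonal fun k => if k ∈ univ.image v then 1 else 0 := by
  ext k k'
  simp only [mul_apply, submatrix_apply, transpose_apply, id, one_apply, ← ite_and, boole_mul]
  rw [← sum_image (f := fun x => if k = x ∧ k' = x then (1 : R) else 0) hv.injOn]
  by_cases hk : k = k'
  · subst hk; simp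
  · rw [diagonal_apply_ne _ hk]
    exact sum_eq_zero fun x _ => if_neg fun h => hk (h.1.trans h.2.symm)

variable [Fintype m]

theorem trace_diagonal_indicator_mul (s t : Finset m) :
    trace (diagonal (fun k => if k ∈ s then (1 : R) else 0) *
      diagonal fun k => if k ∈ t then (1 : R) else 0) = #(s ∩ t) := by
  simp [diagonal_mul_diagonal, trace_diagonal, ← ite_and, sum_boole, filter_and, inter_comm]

theorem trace_gram_one_submatrix {v : n → m} {w : l → m} (hv : v.Injective) (hw : w.Injective) :
    trace ((1 : Matrix m m R).submatrix id v * ((1 : Matrix m m R).submatrix id v)ᵀ *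
      ((1 : Matrix m m R).submatrix id w * ((1 : Matrix m m R).submatrix id w)ᵀ)) =
      #(univ.image v ∩ univ.image w) := by
  rw [one_submatrix_mul_transpose hv, one_submatrix_mul_transpose hw,
    trace_diagonal_indicator_mul]

end Matrix

theorem P4_completely_psd_factorization :
    let P₄ : Matrix (Fin 6) (Fin 6) ℝ :=
      !![2,1,1,1,1,0; 1,2,1,1,0,1; 1,1,2,0,1,1; 1,1,0,2,1,1; 1,0,1,1,2,1; 0,1,1,1,1,2]
    let a : Fin 6 → Matrix (Fin 4) (Fin 2) ℝ :=
      ![!![1,0; 0,1; 0,0; 0,0],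
        !![1,0; 0,0; 0,1; 0,0],
        !![1,0; 0,0; 0,0; 0,1],
        !![0,0; 0,1; 1,0; 0,0],
        !![0,0; 1,0; 0,0; 0,1],
        !![0,0; 0,0; 1,0; 0,1]]
    let A : Fin 6 → Matrix (Fin 4) (Fin 4) ℝ := fun i => a i * (a i)ᵀ
    (∀ i, (A i).PosSemidef) ∧ (∀ i j, P₄ i j = ((A i) * (A j)).trace) := by
  intro P₄ a A
  let S : Fin 6 → Fin 2 → Fin 4 := ![![0, 1], ![0, 2], ![0, 3], ![2, 1], ![1, 3], ![2, 3]]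
  have hS : ∀ i, (S i).Injective := by decide
  have ha : ∀ i, a i = (1 : Matrix (Fin 4) (Fin 4) ℝ).submatrix id (S i) := by
    intro i; ext k c; fin_cases i <;> fin_cases k <;> fin_cases c <;> rfl
  have hcard : ∀ i j, #(univ.image (S i) ∩ univ.image (S j)) =
      if i = j then 2 else if i + j = 5 then 0 else 1 := by
    decide
  have hP : ∀ i j, P₄ i j = #(univ.image (S i) ∩ univ.image (S j)) := by
    intro i j; rw [hcard]; fin_cases i <;> fin_cases j <;> simp [P₄]
  refine ⟨fun i => posSemidef_self_mul_transpose (a i), fun i j => ?_⟩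
  simp only [A, ha, hP, trace_gram_one_submatrix (hS i) (hS j)]
end
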